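/- In so(p+1, p+1) with p odd, the element E = Σ_{k=0}^{(p-1)/2-1} (a_k η^{k+1}∧η̃^k + b_k θ^{k+1}∧θ̃^k) + c η̃^{(p-1)/2} ∧ θ̃^{(p-1)/2} together with F = -θ_C E and H = [E,F] forms an sl₂ triple with the prescribed weights H η^i = -(p-2i)η^i etc., if and only if a_k² = b_k² = (p-k)(k+1) and c² = ((p+1)/2)². -/

import Mathlib

/-!
`E` raises along the two chains `η^0 → ⋯ → η^q → θ̃^q → ⋯ → θ̃^0` and
`θ^0 → ⋯ → θ^q → η̃^q → ⋯ → η̃^0` (`q = (p-1)/2`), and `F = -θ_C E` lowers along the same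
chains with the same coefficients. Hence `H = [E,F]` is diagonal, acting on `η^i` by
`a_{i-1}^2 - a_i^2` (with `a_{-1} = 0`, `a_q = c`), and similarly with `b` on `θ^i`.
Prescribing the weight `2i - p` there fixes the first differences of `i ↦ a_i^2`, which
telescope to `a_i^2 = (p - i)(i + 1)`, the case `i = q` giving `c^2 = ((p+1)/2)^2`.
Conversely, once `H` has these weights, `E` raises and `F` lowers every weight by `2`, so
`[H,E] = 2E` and `[H,F] = -2F`.
-/

abbrev BasisIdx12 (q : ℕ) := (Fin q ⊕ Fin q) ⊕ (Fin q ⊕ Fin q)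

abbrev Vec12 (q : ℕ) := BasisIdx12 q → ℝ

def eta12 {q : ℕ} (i : Fin q) : Vec12 q := fun x => if x = Sum.inl (Sum.inl i) then 1 else 0
def etat12 {q : ℕ} (i : Fin q) : Vec12 q := fun x => if x = Sum.inl (Sum.inr i) then 1 else 0
def th12 {q : ℕ} (i : Fin q) : Vec12 q := fun x => if x = Sum.inr (Sum.inl i) then 1 else 0
def tht12 {q : ℕ} (i : Fin q) : Vec12 q := fun x => if x = Sum.inr (Sum.inr i) then 1 else 0

/-- The bilinear form `τ`, nonzero only on `τ(η^i,η̃^j) = δ^{ij}`, `τ(θ^i,θ̃^j) = δ^{ij}`. -/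
noncomputable def tau12 {q : ℕ} (x y : Vec12 q) : ℝ :=
  ∑ i : Fin q,
    (x (Sum.inl (Sum.inl i)) * y (Sum.inl (Sum.inr i))
      + x (Sum.inl (Sum.inr i)) * y (Sum.inl (Sum.inl i))
      + x (Sum.inr (Sum.inl i)) * y (Sum.inr (Sum.inr i))
      + x (Sum.inr (Sum.inr i)) * y (Sum.inr (Sum.inl i)))

/-- The two-form `u ∧ v` acting as `w ↦ τ(v,w) u - τ(u,w) v`. -/
noncomputable def wedge12 {q : ℕ} (u v : Vec12 q) : Vec12 q → Vec12 q :=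
  fun w => tau12 v w • u - tau12 u w • v

/-- Isometry implementing the Cartan involution: swap `η ↔ η̃` and `θ ↔ θ̃`. -/
def gInv12 {q : ℕ} (x : Vec12 q) : Vec12 q := fun b =>
  match b with
  | Sum.inl (Sum.inl i) => x (Sum.inl (Sum.inr i))
  | Sum.inl (Sum.inr i) => x (Sum.inl (Sum.inl i))
  | Sum.inr (Sum.inl i) => x (Sum.inr (Sum.inr i))
  | Sum.inr (Sum.inr i) => x (Sum.inr (Sum.inl i))

def lieBr12 {q : ℕ} (f g : Vec12 q → Vec12 q) : Vec12 q → Vec12 q :=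
  fun w => f (g w) - g (f w)

/-- `E = Σ_{k=0}^{(p-1)/2-1} (a_k η^{k+1}∧η̃^k + b_k θ^{k+1}∧θ̃^k) + c η̃^{(p-1)/2}∧θ̃^{(p-1)/2}`. -/
noncomputable def E12 (qm : ℕ) (a b : Fin qm → ℝ) (c : ℝ) :
    Vec12 (qm + 1) → Vec12 (qm + 1) :=
  (∑ k : Fin qm, (a k • wedge12 (eta12 k.succ) (etat12 k.castSucc)
      + b k • wedge12 (th12 k.succ) (tht12 k.castSucc)))
    + c • wedge12 (etat12 (Fin.last qm)) (tht12 (Fin.last qm))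

/-- `F = -θ_C E`. -/
noncomputable def F12 (qm : ℕ) (a b : Fin qm → ℝ) (c : ℝ) :
    Vec12 (qm + 1) → Vec12 (qm + 1) :=
  fun w => -gInv12 (E12 qm a b c (gInv12 w))

/-- `H = [E,F]`. -/
noncomputable def H12 (qm : ℕ) (a b : Fin qm → ℝ) (c : ℝ) :
    Vec12 (qm + 1) → Vec12 (qm + 1) :=
  lieBr12 (E12 qm a b c) (F12 qm a b c)

section
variable {q : ℕ} (w : Vec12 q) (i : Fin q)

@[simp] lemma tau12_eta12 : tau12 (eta12 i) w = w (.inl (.inr i)) := by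
  simp [tau12, eta12]

@[simp] lemma tau12_etat12 : tau12 (etat12 i) w = w (.inl (.inl i)) := by
  simp [tau12, etat12]

@[simp] lemma tau12_th12 : tau12 (th12 i) w = w (.inr (.inr i)) := by
  simp [tau12, th12]

@[simp] lemma tau12_tht12 : tau12 (tht12 i) w = w (.inr (.inl i)) := by
  simp [tau12, tht12]

end

section
variable {qm : ℕ} (a b : Fin qm → ℝ) (c : ℝ) (w : Vec12 (qm + 1)) (k : Fin qm)

@[simp] lemma E12_apply_eta_zero : E12 qm a b c w (.inl (.inl 0)) = 0 := by
  simp [E12, wedge12, eta12, etat12, th12, tht12, eq_comm (a := (0 : Fin (qm + 1)))]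

@[simp] lemma E12_apply_eta_succ : E12 qm a b c w (.inl (.inl k.succ)) =
    a k * w (.inl (.inl k.castSucc)) := by
  simp [E12, wedge12, eta12, etat12, th12, tht12]

@[simp] lemma E12_apply_etat_castSucc : E12 qm a b c w (.inl (.inr k.castSucc)) =
    -a k * w (.inl (.inr k.succ)) := by
  simp [E12, wedge12, eta12, etat12, th12, tht12]

@[simp] lemma E12_apply_etat_last : E12 qm a b c w (.inl (.inr (Fin.last qm))) =
    c * w (.inr (.inl (Fin.last qm))) := by
  simp [E12, wedge12, eta12, etat12, th12, tht12, eq_comm (a := Fin.last qm)]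

@[simp] lemma E12_apply_th_zero : E12 qm a b c w (.inr (.inl 0)) = 0 := by
  simp [E12, wedge12, eta12, etat12, th12, tht12, eq_comm (a := (0 : Fin (qm + 1)))]

@[simp] lemma E12_apply_th_succ : E12 qm a b c w (.inr (.inl k.succ)) =
    b k * w (.inr (.inl k.castSucc)) := by
  simp [E12, wedge12, eta12, etat12, th12, tht12]

@[simp] lemma E12_apply_tht_castSucc : E12 qm a b c w (.inr (.inr k.castSucc)) =
    -b k * w (.inr (.inr k.succ)) := by
  simp [E12, wedge12, eta12, etat12, th12, tht12]

@[simp] lemma E12_apply_tht_last : E12 qm a b c w (.inr (.inr (Fin.last qm))) =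
    -(c * w (.inl (.inl (Fin.last qm)))) := by
  simp [E12, wedge12, eta12, etat12, th12, tht12, eq_comm (a := Fin.last qm)]

end

/-- With the conventions `a_{-1} = 0` and `a_n = c`, this is `a_{i-1}^2 - a_i^2`. -/
noncomputable def chainWeight {n : ℕ} (a : Fin n → ℝ) (c : ℝ) (i : Fin (n + 1)) : ℝ :=
  Fin.cons (α := fun _ => ℝ) 0 a i ^ 2 - Fin.snoc (α := fun _ => ℝ) a c i ^ 2

lemma Fin.forall_eq_sub_mul_succ_iff {n : ℕ} (m : ℝ) (s : Fin (n + 1) → ℝ) :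
    (∀ i, s i = (m - i) * (i + 1)) ↔
      s 0 = m ∧ ∀ k : Fin n, s k.succ - s k.castSucc = m - 2 * (k + 1) := by
  refine ⟨fun h => ⟨by simp [h], fun k => by simp [h]; ring⟩, fun ⟨h0, hsucc⟩ i => ?_⟩
  induction i using Fin.induction with
  | zero => simp [h0]
  | succ k ih =>
    rw [← sub_add_cancel (s k.succ) (s k.castSucc), hsucc, ih]
    simp; ring

lemma chainWeight_eq_iff {n : ℕ} (a : Fin n → ℝ) (c : ℝ) :
    (∀ i, chainWeight a c i = -(2 * n + 1 - 2 * i)) ↔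
      (∀ k : Fin n, a k ^ 2 = (2 * n + 1 - k) * (k + 1)) ∧ c ^ 2 = (n + 1) ^ 2 := by
  set s : Fin (n + 1) → ℝ := fun i => Fin.snoc (α := fun _ => ℝ) a c i ^ 2
  have hzero : chainWeight a c 0 = -s 0 := by simp [chainWeight, s]
  have hsucc (k : Fin n) : chainWeight a c k.succ = s k.castSucc - s k.succ := by
    simp [chainWeight, s]
  calc (∀ i, chainWeight a c i = -(2 * n + 1 - 2 * i))
      ↔ s 0 = 2 * n + 1 ∧ ∀ k : Fin n, s k.succ - s k.castSucc = 2 * n + 1 - 2 * (k + 1) := by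
        rw [Fin.forall_fin_succ, hzero]
        simp only [hsucc, neg_inj, Fin.val_zero, Fin.val_succ]
        push_cast
        refine and_congr (by simp) (forall_congr' fun k => ?_)
        constructor <;> intro h <;> linarith
    _ ↔ ∀ i, s i = (2 * n + 1 - i) * (i + 1) := (Fin.forall_eq_sub_mul_succ_iff _ s).symm
    _ ↔ _ := by
        rw [Fin.forall_fin_succ']
        simp only [s, Fin.snoc_castSucc, Fin.snoc_last, Fin.val_castSucc, Fin.val_last]
        exact and_congr Iff.rfl (by ring_nf)

section
variable {qm : ℕ} (a b : Fin qm → ℝ) (c : ℝ) (w : Vec12 (qm + 1)) (i : Fin (qm + 1))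

@[simp] lemma H12_apply_eta : H12 qm a b c w (.inl (.inl i)) =
    chainWeight a c i * w (.inl (.inl i)) := by
  have hEF : E12 qm a b c (F12 qm a b c w) (.inl (.inl i))
      = Fin.cons (α := fun _ => ℝ) 0 a i ^ 2 * w (.inl (.inl i)) := by
    cases i using Fin.cases <;> simp [F12, gInv12, sq, mul_assoc]
  have hFE : F12 qm a b c (E12 qm a b c w) (.inl (.inl i))
      = Fin.snoc (α := fun _ => ℝ) a c i ^ 2 * w (.inl (.inl i)) := by
    cases i using Fin.lastCases <;> simp [F12, gInv12, sq, mul_assoc]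
  rw [H12, lieBr12, Pi.sub_apply, hEF, hFE, chainWeight, sub_mul]

@[simp] lemma H12_apply_etat : H12 qm a b c w (.inl (.inr i)) =
    -chainWeight a c i * w (.inl (.inr i)) := by
  have hEF : E12 qm a b c (F12 qm a b c w) (.inl (.inr i))
      = Fin.snoc (α := fun _ => ℝ) a c i ^ 2 * w (.inl (.inr i)) := by
    cases i using Fin.lastCases <;> simp [F12, gInv12, sq, mul_assoc]
  have hFE : F12 qm a b c (E12 qm a b c w) (.inl (.inr i))
      = Fin.cons (α := fun _ => ℝ) 0 a i ^ 2 * w (.inl (.inr i)) := by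
    cases i using Fin.cases <;> simp [F12, gInv12, sq, mul_assoc]
  rw [H12, lieBr12, Pi.sub_apply, hEF, hFE, chainWeight]
  ring

@[simp] lemma H12_apply_th : H12 qm a b c w (.inr (.inl i)) =
    chainWeight b c i * w (.inr (.inl i)) := by
  have hEF : E12 qm a b c (F12 qm a b c w) (.inr (.inl i))
      = Fin.cons (α := fun _ => ℝ) 0 b i ^ 2 * w (.inr (.inl i)) := by
    cases i using Fin.cases <;> simp [F12, gInv12, sq, mul_assoc]
  have hFE : F12 qm a b c (E12 qm a b c w) (.inr (.inl i))
      = Fin.snoc (α := fun _ => ℝ) b c i ^ 2 * w (.inr (.inl i)) := by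
    cases i using Fin.lastCases <;> simp [F12, gInv12, sq, mul_assoc]
  rw [H12, lieBr12, Pi.sub_apply, hEF, hFE, chainWeight, sub_mul]

@[simp] lemma H12_apply_tht : H12 qm a b c w (.inr (.inr i)) =
    -chainWeight b c i * w (.inr (.inr i)) := by
  have hEF : E12 qm a b c (F12 qm a b c w) (.inr (.inr i))
      = Fin.snoc (α := fun _ => ℝ) b c i ^ 2 * w (.inr (.inr i)) := by
    cases i using Fin.lastCases <;> simp [F12, gInv12, sq, mul_assoc]
  have hFE : F12 qm a b c (E12 qm a b c w) (.inr (.inr i))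
      = Fin.cons (α := fun _ => ℝ) 0 b i ^ 2 * w (.inr (.inr i)) := by
    cases i using Fin.cases <;> simp [F12, gInv12, sq, mul_assoc]
  rw [H12, lieBr12, Pi.sub_apply, hEF, hFE, chainWeight]
  ring

lemma H12_eta12 : H12 qm a b c (eta12 i) = chainWeight a c i • eta12 i := by
  funext x
  rcases x with (j | j) | (j | j) <;> by_cases h : j = i <;> simp [eta12, h]

lemma H12_th12 : H12 qm a b c (th12 i) = chainWeight b c i • th12 i := by
  funext x
  rcases x with (j | j) | (j | j) <;> by_cases h : j = i <;> simp [th12, h]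

lemma H12_etat12 : H12 qm a b c (etat12 i) = -chainWeight a c i • etat12 i := by
  funext x
  rcases x with (j | j) | (j | j) <;> by_cases h : j = i <;> simp [etat12, h]

lemma H12_tht12 : H12 qm a b c (tht12 i) = -chainWeight b c i • tht12 i := by
  funext x
  rcases x with (j | j) | (j | j) <;> by_cases h : j = i <;> simp [tht12, h]

end

@[simp] lemma eta12_ne_zero {q : ℕ} (i : Fin q) : eta12 i ≠ 0 :=
  fun h => by simpa [eta12] using congrFun h (.inl (.inl i))

@[simp] lemma etat12_ne_zero {q : ℕ} (i : Fin q) : etat12 i ≠ 0 :=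
  fun h => by simpa [etat12] using congrFun h (.inl (.inr i))

@[simp] lemma th12_ne_zero {q : ℕ} (i : Fin q) : th12 i ≠ 0 :=
  fun h => by simpa [th12] using congrFun h (.inr (.inl i))

@[simp] lemma tht12_ne_zero {q : ℕ} (i : Fin q) : tht12 i ≠ 0 :=
  fun h => by simpa [tht12] using congrFun h (.inr (.inr i))

section
variable {qm : ℕ} {a b : Fin qm → ℝ} {c : ℝ}

lemma lieBr12_H12_E12 (ha : ∀ i, chainWeight a c i = -(2 * qm + 1 - 2 * i))
    (hb : ∀ i, chainWeight b c i = -(2 * qm + 1 - 2 * i)) :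
    lieBr12 (H12 qm a b c) (E12 qm a b c) = (2 : ℝ) • E12 qm a b c := by
  funext w x
  rcases x with (i | i) | (i | i) <;>
    [cases i using Fin.cases; cases i using Fin.lastCases; cases i using Fin.cases;
      cases i using Fin.lastCases] <;>
    simp [lieBr12, ha, hb] <;> ring

lemma lieBr12_H12_F12 (ha : ∀ i, chainWeight a c i = -(2 * qm + 1 - 2 * i))
    (hb : ∀ i, chainWeight b c i = -(2 * qm + 1 - 2 * i)) :
    lieBr12 (H12 qm a b c) (F12 qm a b c) = (-2 : ℝ) • F12 qm a b c := by
  funext w x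
  rcases x with (i | i) | (i | i) <;>
    [cases i using Fin.lastCases; cases i using Fin.cases; cases i using Fin.lastCases;
      cases i using Fin.cases] <;>
    simp [lieBr12, F12, gInv12, ha, hb] <;> ring

end

lemma H12_basis_iff {qm : ℕ} (a b : Fin qm → ℝ) (c : ℝ) :
    (∀ i : Fin (qm + 1),
        H12 qm a b c (eta12 i) = (-(2 * (qm : ℝ) + 1 - 2 * (i : ℕ))) • eta12 i ∧
        H12 qm a b c (th12 i) = (-(2 * (qm : ℝ) + 1 - 2 * (i : ℕ))) • th12 i ∧
        H12 qm a b c (etat12 i) = (2 * (qm : ℝ) + 1 - 2 * (i : ℕ)) • etat12 i ∧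
        H12 qm a b c (tht12 i) = (2 * (qm : ℝ) + 1 - 2 * (i : ℕ)) • tht12 i) ↔
      (∀ i, chainWeight a c i = -(2 * qm + 1 - 2 * i)) ∧
        ∀ i, chainWeight b c i = -(2 * qm + 1 - 2 * i) := by
  simp only [H12_eta12, H12_th12, H12_etat12, H12_tht12, smul_left_inj (eta12_ne_zero _),
    smul_left_inj (th12_ne_zero _), smul_left_inj (etat12_ne_zero _),
    smul_left_inj (tht12_ne_zero _), neg_eq_iff_eq_neg]
  exact ⟨fun h => ⟨fun i => (h i).1, fun i => (h i).2.1⟩,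
    fun ⟨ha, hb⟩ i => ⟨ha i, hb i, ha i, hb i⟩⟩

theorem stmt12 (qm : ℕ) (a b : Fin qm → ℝ) (c : ℝ) :
    (lieBr12 (H12 qm a b c) (E12 qm a b c) = (2 : ℝ) • E12 qm a b c ∧
     lieBr12 (H12 qm a b c) (F12 qm a b c) = (-2 : ℝ) • F12 qm a b c ∧
     (∀ i : Fin (qm + 1),
        H12 qm a b c (eta12 i) = (-(2 * (qm : ℝ) + 1 - 2 * (i : ℕ))) • eta12 i ∧
        H12 qm a b c (th12 i) = (-(2 * (qm : ℝ) + 1 - 2 * (i : ℕ))) • th12 i ∧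
        H12 qm a b c (etat12 i) = (2 * (qm : ℝ) + 1 - 2 * (i : ℕ)) • etat12 i ∧
        H12 qm a b c (tht12 i) = (2 * (qm : ℝ) + 1 - 2 * (i : ℕ)) • tht12 i))
    ↔ ((∀ k : Fin qm,
          (a k) ^ 2 = (2 * (qm : ℝ) + 1 - (k : ℕ)) * ((k : ℕ) + 1) ∧
          (b k) ^ 2 = (2 * (qm : ℝ) + 1 - (k : ℕ)) * ((k : ℕ) + 1)) ∧
        c ^ 2 = ((qm : ℝ) + 1) ^ 2) := by
  rw [H12_basis_iff]
  constructor
  · rintro ⟨-, -, ha, hb⟩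
    obtain ⟨ha, hc⟩ := (chainWeight_eq_iff a c).1 ha
    obtain ⟨hb, -⟩ := (chainWeight_eq_iff b c).1 hb
    exact ⟨fun k => ⟨ha k, hb k⟩, hc⟩
  · rintro ⟨hab, hc⟩
    have ha := (chainWeight_eq_iff a c).2 ⟨fun k => (hab k).1, hc⟩
    have hb := (chainWeight_eq_iff b c).2 ⟨fun k => (hab k).2, hc⟩
    exact ⟨lieBr12_H12_E12 ha hb, lieBr12_H12_F12 ha hb, ha, hb⟩
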